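/- arXiv:2009.12311 — 4 statements merged into one kernel-verified Lean document; each statement's English description precedes it below -/
import Mathlib

section
/- Let ε, r > 0 and x₀ ∈ ℝ². If an affine function h(x) = x·y + η (with y ∈ ℝ², η ∈ ℝ) satisfies h ≤ ε on the boundary of the disk B(x₀, r), and h(x₁) ≥ −ε for some x₁ ∈ B(x₀, r/2), then ‖y‖ ≤ 4ε/r. -/
open Metric

/-!
The maximum of `x ↦ ⟪x, y⟫` on the circle `∂B(x₀, r)` is `⟪x₀, y⟫ + r‖y‖`, attained in the
direction of `y`, while on `B(x₀, r/2)` it is at most `⟪x₀, y⟫ + (r/2)‖y‖`. So `h` rises by at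
least `(r/2)‖y‖` from `x₁` to the boundary, and that rise is at most `ε - (-ε) = 2ε`.
-/

open RealInnerProductSpace

variable {E : Type*} [NormedAddCommGroup E] [InnerProductSpace ℝ E]

theorem exists_mem_sphere_inner_add_mul_norm_le [Nontrivial E] (x₀ y : E) {r : ℝ} (hr : 0 ≤ r) :
    ∃ x ∈ sphere x₀ r, ⟪x₀, y⟫ + r * ‖y‖ ≤ ⟪x, y⟫ := by
  rcases eq_or_ne y 0 with rfl | hy
  · obtain ⟨x, hx⟩ := (NormedSpace.sphere_nonempty (x := x₀)).mpr hr
    exact ⟨x, hx, by simp⟩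
  · have hy' : ‖y‖ ≠ 0 := norm_ne_zero_iff.mpr hy
    refine ⟨x₀ + (r / ‖y‖) • y, ?_, le_of_eq ?_⟩
    · rw [mem_sphere, dist_eq_norm, add_sub_cancel_left, norm_smul, Real.norm_eq_abs,
        abs_div, abs_norm, abs_of_nonneg hr, div_mul_cancel₀ r hy']
    · rw [inner_add_left, real_inner_smul_left, real_inner_self_eq_norm_sq]
      field_simp

theorem inner_le_inner_add_dist_mul_norm (x₀ x₁ y : E) :
    ⟪x₁, y⟫ ≤ ⟪x₀, y⟫ + dist x₁ x₀ * ‖y‖ := by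
  have h := real_inner_le_norm (x₁ - x₀) y
  rw [inner_sub_left, ← dist_eq_norm] at h
  linarith

theorem sub_dist_mul_norm_le_of_inner_add_le_on_sphere [Nontrivial E] {x₀ x₁ y : E}
    {r ε η : ℝ} (hr : 0 ≤ r) (hupper : ∀ x ∈ sphere x₀ r, ⟪x, y⟫ + η ≤ ε)
    (hlower : -ε ≤ ⟪x₁, y⟫ + η) :
    (r - dist x₁ x₀) * ‖y‖ ≤ 2 * ε := by
  obtain ⟨x, hx, hmax⟩ := exists_mem_sphere_inner_add_mul_norm_le x₀ y hr
  have hx₁ := inner_le_inner_add_dist_mul_norm x₀ x₁ y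
  linarith [hupper x hx]

theorem affine_gradient_bound_general
    (ε r : ℝ) (hr : 0 < r)
    (x₀ : EuclideanSpace ℝ (Fin 2)) (y : EuclideanSpace ℝ (Fin 2)) (η : ℝ)
    (hupper : ∀ x ∈ sphere x₀ r, (inner ℝ x y : ℝ) + η ≤ ε)
    (x₁ : EuclideanSpace ℝ (Fin 2)) (hx₁ : x₁ ∈ ball x₀ (r / 2))
    (hlower : -ε ≤ (inner ℝ x₁ y : ℝ) + η) :
    ‖y‖ ≤ 4 * ε / r := by
  have hrise := sub_dist_mul_norm_le_of_inner_add_le_on_sphere hr.le hupper hlower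
  have hhalf : r / 2 * ‖y‖ ≤ (r - dist x₁ x₀) * ‖y‖ :=
    mul_le_mul_of_nonneg_right (by linarith [mem_ball.mp hx₁]) (norm_nonneg y)
  rw [le_div_iff₀ hr]
  linarith

/-- If an affine function `h x = ⟪x, y⟫ + η` on `ℝ²` is at most `ε` on the boundary circle of
`B(x₀, r)` and at least `-ε` at some point of `B(x₀, r/2)`, then `‖y‖ ≤ 4ε/r`. -/
theorem affine_gradient_bound
    (ε r : ℝ) (hε : 0 < ε) (hr : 0 < r)
    (x₀ : EuclideanSpace ℝ (Fin 2)) (y : EuclideanSpace ℝ (Fin 2)) (η : ℝ)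
    (hupper : ∀ x ∈ sphere x₀ r, (inner ℝ x y : ℝ) + η ≤ ε)
    (x₁ : EuclideanSpace ℝ (Fin 2)) (hx₁ : x₁ ∈ ball x₀ (r / 2))
    (hlower : -ε ≤ (inner ℝ x₁ y : ℝ) + η) :
    ‖y‖ ≤ 4 * ε / r :=
  affine_gradient_bound_general ε r hr x₀ y η hupper x₁ hx₁ hlower
end

section
/- Let Ω ⊂ ℝ² be a bounded convex domain and u a strictly convex C¹ function on a convex open U ⊂ ℝ² with bounded closure. Then the following are equivalent: (i) ‖Du(x)‖ → +∞ as x → ∂U; (ii) the graph of u (extended lower semicontinuously to the closure) has no non-vertical supporting plane at any boundary point of U; (iii) Du(U) = ℝ². -/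
/-!
Write `ℓ x = ⟪y, x⟫ - c` and `v = u - ℓ`. A supporting plane at `x₀ ∈ ∂U` means `v ≥ 0` on `U`
with `liminf_{x → x₀} v x = 0`. Convexity then gives `v ((1 - t) x₀ + t q) ≤ t v q`, and testing
the tangent planes of `v` at the points `(1 - t) x₀ + t z` against this bound keeps `‖Du - y‖`
bounded along a segment ending at `x₀`; with strict convexity it also rules out `Du = y` in `U`.
Conversely, bounded gradients along a sequence tending to `x₀` have, by compactness, tangent
planes converging to a supporting plane at `x₀`; and if `y ∉ Du(U)`, then `u - ⟪y, ·⟫` is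
bounded below on `U` but has no critical point, so its infimum is approached only at the
boundary, where it again yields a supporting plane.
-/

open Filter Set Topology
open scoped RealInnerProductSpace

theorem ConvexOn.tangent_le_of_hasFDerivAt {F : Type*} [NormedAddCommGroup F] [NormedSpace ℝ F]
    {U : Set F} {u : F → ℝ} {u' : F →L[ℝ] ℝ} {x z : F} (hu : ConvexOn ℝ U u) (hz : z ∈ U)
    (hx : x ∈ U) (hu' : HasFDerivAt u u' z) : u z + u' (x - z) ≤ u x := by
  set L : ℝ →ᵃ[ℝ] F := AffineMap.lineMap z x
  have hline : ConvexOn ℝ (L ⁻¹' U) (u ∘ L) := hu.comp_affineMap L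
  have hderiv : HasDerivAt (u ∘ L) (u' (x - z)) 0 := by
    have hu'0 : HasFDerivAt u u' (L 0) := by simpa [L] using hu'
    simpa [L] using hu'0.comp_hasDerivAt (0 : ℝ) AffineMap.hasDerivAt_lineMap
  have := hline.le_slope_of_hasDerivAt (x := 0) (y := 1) (by simpa [L] using hz)
    (by simpa [L] using hx) zero_lt_one hderiv
  simp [L, slope_def_field] at this
  linarith [map_sub u' x z]

theorem coe_eq_liminf_iff_frequently_sub_lt {α : Type*} {F : Filter α} [F.NeBot] {u ℓ : α → ℝ}
    {b : ℝ} (hℓ : Tendsto ℓ F (𝓝 b)) (hle : ∀ᶠ x in F, ℓ x ≤ u x) :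
    (b : EReal) = liminf (fun x => (u x : EReal)) F ↔ ∀ ε > 0, ∃ᶠ x in F, u x - ℓ x < ε := by
  constructor
  · intro h ε hε
    have hlt : liminf (fun x => (u x : EReal)) F < ((b + ε / 2 : ℝ) : EReal) := by
      rw [← h]; exact_mod_cast (by linarith : b < b + ε / 2)
    have hu : ∃ᶠ x in F, u x < b + ε / 2 :=
      (frequently_lt_of_liminf_lt (by isBoundedDefault) hlt).mono fun x hx => by exact_mod_cast hx
    have hℓ' : ∀ᶠ x in F, b - ε / 2 < ℓ x := hℓ.eventually (lt_mem_nhds (by linarith))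
    exact (hu.and_eventually hℓ').mono fun x hx => by linarith [hx.1, hx.2]
  · intro h
    apply le_antisymm
    · calc (b : EReal) = liminf (fun x => (ℓ x : EReal)) F :=
            ((continuous_coe_real_ereal.tendsto b).comp hℓ).liminf_eq.symm
        _ ≤ liminf (fun x => (u x : EReal)) F :=
            liminf_le_liminf (hle.mono fun x hx => by exact_mod_cast hx)
    · refine EReal.le_of_forall_lt_iff_le.mp fun z hz => liminf_le_of_frequently_le' ?_
      have hbz : b < z := by exact_mod_cast hz
      have hℓ' : ∀ᶠ x in F, ℓ x < b + (z - b) / 2 := hℓ.eventually (gt_mem_nhds (by linarith))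
      exact ((h ((z - b) / 2) (by linarith)).and_eventually hℓ').mono fun x hx => by
        exact_mod_cast (by linarith [hx.1, hx.2] : u x ≤ z)

theorem ConvexOn.le_mul_of_frequently_lt {F : Type*} [NormedAddCommGroup F] [NormedSpace ℝ F]
    {U : Set F} {v : F → ℝ} {x₀ z : F} {t : ℝ} (hUo : IsOpen U) (hv : ConvexOn ℝ U v)
    (hz : z ∈ U) (hvz : ContinuousAt v z) (hsmall : ∀ ε > 0, ∃ᶠ x in 𝓝[U] x₀, v x < ε)
    (ht₀ : 0 < t) (ht₁ : t ≤ 1) : v ((1 - t) • x₀ + t • z) ≤ t * v z := by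
  set ζ : F → F := fun w => z + ((1 - t) / t) • (x₀ - w)
  have hζ : Tendsto ζ (𝓝 x₀) (𝓝 z) := by
    have : Continuous ζ := by fun_prop
    simpa [ζ] using this.tendsto x₀
  have hcomb : ∀ w, (1 - t) • w + t • ζ w = (1 - t) • x₀ + t • z := fun w => by
    simp only [ζ, smul_add, smul_smul, mul_div_cancel₀ _ ht₀.ne']
    module
  refine le_of_forall_pos_lt_add fun ε hε => ?_
  have hnear : ∀ᶠ w in 𝓝[U] x₀, ζ w ∈ U ∧ v (ζ w) < v z + ε / 2 :=
    nhdsWithin_le_nhds (hζ.eventually ((hUo.eventually_mem hz).and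
      (hvz.eventually (gt_mem_nhds (by linarith)))))
  obtain ⟨w, hvw, hwU, hζU, hvζ⟩ :=
    ((hsmall (ε / 2) (by positivity)).and_eventually (eventually_mem_nhdsWithin.and hnear)).exists
  have hconv := hv.2 hwU hζU (by linarith : 0 ≤ 1 - t) ht₀.le (by ring)
  rw [hcomb, smul_eq_mul, smul_eq_mul] at hconv
  nlinarith

section InnerProductSpace

variable {E : Type*} [NormedAddCommGroup E] [InnerProductSpace ℝ E]

theorem Convex.combo_closure_mem_of_isOpen {U : Set E} {x₀ z : E} {t : ℝ} (hUo : IsOpen U)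
    (hUc : Convex ℝ U) (hx₀ : x₀ ∈ closure U) (hz : z ∈ U) (ht₀ : 0 < t) (ht₁ : t ≤ 1) :
    (1 - t) • x₀ + t • z ∈ U := by
  have := hUc.combo_closure_interior_mem_interior hx₀ (hUo.interior_eq.symm ▸ hz)
    (by linarith : 0 ≤ 1 - t) ht₀ (by ring)
  rwa [hUo.interior_eq] at this

theorem concaveOn_inner_sub_const {U : Set E} (hU : Convex ℝ U) (y : E) (c : ℝ) :
    ConcaveOn ℝ U fun x => ⟪y, x⟫ - c :=
  ((innerₗ E y).concaveOn hU).sub (convexOn_const c hU)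

theorem norm_le_div_of_forall_inner_le {g : E} {ρ M : ℝ} (hρ : 0 < ρ)
    (h : ∀ d : E, ‖d‖ ≤ ρ → ⟪g, d⟫ ≤ M) : ‖g‖ ≤ M / ρ := by
  rw [le_div_iff₀ hρ]
  rcases eq_or_ne g 0 with rfl | hg
  · simpa using h 0 (by simpa using hρ.le)
  have hgn : 0 < ‖g‖ := norm_pos_iff.mpr hg
  have := h ((ρ / ‖g‖) • g)
    (by rw [norm_smul, Real.norm_of_nonneg (by positivity)]; field_simp; rfl)
  rw [real_inner_smul_right, real_inner_self_eq_norm_sq] at this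
  field_simp at this
  linarith

/-- The liminf is the value at `x₀` of the lower semicontinuous extension of `u` from `U`. -/
def IsSupportingPlane (U : Set E) (u : E → ℝ) (x₀ y : E) (c : ℝ) : Prop :=
  (∀ x ∈ U, ⟪y, x⟫ - c ≤ u x) ∧
    ((⟪y, x₀⟫ - c : ℝ) : EReal) = liminf (fun x => (u x : EReal)) (𝓝[U] x₀)

theorem isSupportingPlane_iff {U : Set E} {u : E → ℝ} {x₀ y : E} {c : ℝ} (hx₀ : x₀ ∈ closure U) :
    IsSupportingPlane U u x₀ y c ↔
      (∀ x ∈ U, ⟪y, x⟫ - c ≤ u x) ∧ ∀ ε > 0, ∃ᶠ x in 𝓝[U] x₀, u x - (⟪y, x⟫ - c) < ε := by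
  have := mem_closure_iff_nhdsWithin_neBot.mp hx₀
  have hℓ : Tendsto (fun x => ⟪y, x⟫ - c) (𝓝[U] x₀) (𝓝 (⟪y, x₀⟫ - c)) :=
    ((Continuous.tendsto (by fun_prop) x₀).mono_left nhdsWithin_le_nhds)
  exact and_congr_right fun hle =>
    coe_eq_liminf_iff_frequently_sub_lt hℓ (eventually_mem_nhdsWithin.mono hle)

theorem isSupportingPlane_of_tendsto {U : Set E} {u : E → ℝ} {x₀ y : E} {c : ℝ}
    (hle : ∀ x ∈ U, ⟪y, x⟫ - c ≤ u x) {w : ℕ → E} (hwU : ∀ n, w n ∈ U)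
    (hw : Tendsto w atTop (𝓝 x₀))
    (hgap : Tendsto (fun n => u (w n) - (⟪y, w n⟫ - c)) atTop (𝓝 0)) :
    IsSupportingPlane U u x₀ y c := by
  have hw' : Tendsto w atTop (𝓝[U] x₀) := tendsto_nhdsWithin_iff.mpr ⟨hw, .of_forall hwU⟩
  refine (isSupportingPlane_iff (mem_closure_of_tendsto hw (.of_forall hwU))).mpr ⟨hle, ?_⟩
  exact fun ε hε => hw'.frequently (hgap.eventually (gt_mem_nhds hε)).frequently

variable [CompleteSpace E]

theorem ConvexOn.tangent_le_of_hasGradientAt {U : Set E} {u : E → ℝ} {g x z : E}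
    (hu : ConvexOn ℝ U u) (hz : z ∈ U) (hx : x ∈ U) (hg : HasGradientAt u g z) :
    u z + ⟪g, x - z⟫ ≤ u x := by
  simpa using hu.tangent_le_of_hasFDerivAt hz hx hg.hasFDerivAt

theorem ConvexOn.sub_norm_mul_norm_le_of_hasGradientAt {U : Set E} {u : E → ℝ} {g x z : E}
    (hu : ConvexOn ℝ U u) (hz : z ∈ U) (hx : x ∈ U) (hg : HasGradientAt u g z) :
    u z - ‖g‖ * ‖x - z‖ ≤ u x := by
  linarith [hu.tangent_le_of_hasGradientAt hz hx hg,
    neg_le_of_abs_le (abs_real_inner_le_norm g (x - z))]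

theorem StrictConvexOn.tangent_lt_of_hasGradientAt {U : Set E} {u : E → ℝ} {g x z : E}
    (hu : StrictConvexOn ℝ U u) (hz : z ∈ U) (hx : x ∈ U) (hxz : x ≠ z)
    (hg : HasGradientAt u g z) : u z + ⟪g, x - z⟫ < u x := by
  have hmid : (1 / 2 : ℝ) • z + (1 / 2 : ℝ) • x ∈ U :=
    hu.1 hz hx (by norm_num) (by norm_num) (by norm_num)
  have htangent := hu.convexOn.tangent_le_of_hasGradientAt hz hmid hg
  have hstrict := hu.2 hz hx hxz.symm (by norm_num : (0 : ℝ) < 1 / 2)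
    (by norm_num : (0 : ℝ) < 1 / 2) (by norm_num)
  have hsub : (1 / 2 : ℝ) • z + (1 / 2 : ℝ) • x - z = (1 / 2 : ℝ) • (x - z) := by module
  rw [hsub, real_inner_smul_right] at htangent
  simp only [smul_eq_mul] at hstrict
  linarith

theorem IsLocalMin.hasGradientAt_eq_zero {u : E → ℝ} {g a : E} (h : IsLocalMin u a)
    (hg : HasGradientAt u g a) : g = 0 :=
  (InnerProductSpace.toDual ℝ E).map_eq_zero_iff.mp (h.hasFDerivAt_eq_zero hg.hasFDerivAt)

theorem HasGradientAt.sub_inner_sub_const {u : E → ℝ} {g x : E} (hg : HasGradientAt u g x)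
    (y : E) (c : ℝ) : HasGradientAt (fun x => u x - (⟪y, x⟫ - c)) (g - y) x := by
  rw [hasGradientAt_iff_hasFDerivAt, map_sub]
  exact hg.hasFDerivAt.sub (((innerSL ℝ y).hasFDerivAt).sub_const c)

theorem ConvexOn.norm_gradient_le_of_frequently_lt {U : Set E} {v : E → ℝ} {g : E → E}
    {x₀ z : E} {ρ M t : ℝ} (hUo : IsOpen U) (hUc : Convex ℝ U) (hv : ConvexOn ℝ U v)
    (hg : ∀ x ∈ U, HasGradientAt v (g x) x) (hv₀ : ∀ x ∈ U, 0 ≤ v x) (hx₀ : x₀ ∈ closure U)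
    (hsmall : ∀ ε > 0, ∃ᶠ x in 𝓝[U] x₀, v x < ε) (hρ : 0 < ρ)
    (hball : ∀ q ∈ Metric.closedBall z ρ, q ∈ U ∧ v q ≤ M) (ht₀ : 0 < t) (ht₁ : t ≤ 1) :
    ‖g ((1 - t) • x₀ + t • z)‖ ≤ M / ρ := by
  have hmem : ∀ q ∈ U, (1 - t) • x₀ + t • q ∈ U := fun q hq =>
    hUc.combo_closure_mem_of_isOpen hUo hx₀ hq ht₀ ht₁
  have hzU := (hball z (Metric.mem_closedBall_self hρ.le)).1
  refine norm_le_div_of_forall_inner_le hρ fun d hd => ?_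
  obtain ⟨hqU, hqM⟩ := hball (z + d) (by simpa [Metric.mem_closedBall, dist_eq_norm] using hd)
  have htangent := hv.tangent_le_of_hasGradientAt (hmem z hzU) (hmem _ hqU) (hg _ (hmem z hzU))
  have hdiff : (1 - t) • x₀ + t • (z + d) - ((1 - t) • x₀ + t • z) = t • d := by module
  rw [hdiff, real_inner_smul_right] at htangent
  have hupper := hv.le_mul_of_frequently_lt hUo hqU (hg _ hqU).continuousAt hsmall ht₀ ht₁
  have hvx := hv₀ _ (hmem z hzU)
  have : t * ⟪g ((1 - t) • x₀ + t • z), d⟫ ≤ t * M := by nlinarith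
  exact le_of_mul_le_mul_left this ht₀

theorem StrictConvexOn.gradient_ne_zero_of_frequently_lt {U : Set E} {v : E → ℝ} {g : E → E}
    {x₀ z : E} (hUo : IsOpen U) (hUc : Convex ℝ U) (hv : StrictConvexOn ℝ U v)
    (hg : ∀ x ∈ U, HasGradientAt v (g x) x) (hx₀ : x₀ ∈ frontier U)
    (hsmall : ∀ ε > 0, ∃ᶠ x in 𝓝[U] x₀, v x < ε) (hz : z ∈ U) (hvz : 0 ≤ v z) : g z ≠ 0 := by
  intro hgz
  have hmU := hUc.combo_closure_mem_of_isOpen hUo hx₀.1 hz (by norm_num : (0 : ℝ) < 1 / 2)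
    (by norm_num)
  have hmz : (1 - 1 / 2 : ℝ) • x₀ + (1 / 2 : ℝ) • z ≠ z := by
    intro h
    apply hx₀.2
    rw [hUo.interior_eq, show x₀ = z by linear_combination (norm := module) (2 : ℝ) • h]
    exact hz
  have hlt := hv.tangent_lt_of_hasGradientAt hz hmU hmz (hg z hz)
  rw [hgz, inner_zero_left, add_zero] at hlt
  have hle := hv.convexOn.le_mul_of_frequently_lt hUo hz (hg z hz).continuousAt hsmall
    (by norm_num : (0 : ℝ) < 1 / 2) (by norm_num)
  linarith

variable {U : Set E} {u : E → ℝ} {f' : E → E}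

theorem IsSupportingPlane.not_tendsto_norm_gradient_atTop {x₀ y : E} {c : ℝ} (hUo : IsOpen U)
    (hUc : Convex ℝ U) (hUne : U.Nonempty) (hu : ConvexOn ℝ U u)
    (hgrad : ∀ x ∈ U, HasGradientAt u (f' x) x) (hx₀ : x₀ ∈ closure U)
    (h : IsSupportingPlane U u x₀ y c) : ¬ Tendsto (fun x => ‖f' x‖) (𝓝[U] x₀) atTop := by
  obtain ⟨hle, hsmall⟩ := (isSupportingPlane_iff hx₀).mp h
  set v := fun x => u x - (⟪y, x⟫ - c)
  have hvgrad : ∀ x ∈ U, HasGradientAt v (f' x - y) x := fun x hx =>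
    (hgrad x hx).sub_inner_sub_const y c
  obtain ⟨z, hz⟩ := hUne
  obtain ⟨ρ, hρ, hball⟩ : ∃ ρ > 0, ∀ q ∈ Metric.closedBall z ρ, q ∈ U ∧ v q ≤ v z + 1 :=
    Metric.nhds_basis_closedBall.eventually_iff.mp ((hUo.eventually_mem hz).and
      ((hvgrad z hz).continuousAt.eventually (ge_mem_nhds (by linarith))))
  have hcurve : Tendsto (fun t : ℝ => (1 - t) • x₀ + t • z) (𝓝[>] 0) (𝓝[U] x₀) := by
    refine tendsto_nhdsWithin_iff.mpr ⟨?_, ?_⟩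
    · have : Continuous fun t : ℝ => (1 - t) • x₀ + t • z := by fun_prop
      simpa using (this.tendsto 0).mono_left nhdsWithin_le_nhds
    · filter_upwards [Ioc_mem_nhdsGT one_pos] with t ht
      exact hUc.combo_closure_mem_of_isOpen hUo hx₀ hz ht.1 ht.2
  intro hT
  have hlarge : ∀ᶠ t in 𝓝[>] (0 : ℝ), (v z + 1) / ρ + ‖y‖ < ‖f' ((1 - t) • x₀ + t • z)‖ :=
    (hT.comp hcurve).eventually (eventually_gt_atTop _)
  obtain ⟨t, hlarge, ht⟩ := (hlarge.and (Ioc_mem_nhdsGT one_pos)).exists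
  have hbound := (hu.sub (concaveOn_inner_sub_const hu.1 y c)).norm_gradient_le_of_frequently_lt
    hUo hUc hvgrad (fun x hx => sub_nonneg.mpr (hle x hx)) hx₀ hsmall hρ hball ht.1 ht.2
  have := norm_le_norm_sub_add (f' ((1 - t) • x₀ + t • z)) y
  linarith

theorem IsSupportingPlane.notMem_image_gradient {x₀ y : E} {c : ℝ} (hUo : IsOpen U)
    (hUc : Convex ℝ U) (hu : StrictConvexOn ℝ U u) (hgrad : ∀ x ∈ U, HasGradientAt u (f' x) x)
    (hx₀ : x₀ ∈ frontier U) (h : IsSupportingPlane U u x₀ y c) : y ∉ f' '' U := by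
  obtain ⟨hle, hsmall⟩ := (isSupportingPlane_iff hx₀.1).mp h
  rintro ⟨z, hz, rfl⟩
  have hv := hu.sub_concaveOn (concaveOn_inner_sub_const hu.1 (f' z) c)
  exact hv.gradient_ne_zero_of_frequently_lt hUo hUc
    (fun x hx => (hgrad x hx).sub_inner_sub_const (f' z) c) hx₀ hsmall hz
    (sub_nonneg.mpr (hle z hz)) (sub_self _)

theorem ConvexOn.isSupportingPlane_of_tendsto_gradient {x₀ y : E} {α : ℝ} {w : ℕ → E}
    (hu : ConvexOn ℝ U u) (hgrad : ∀ x ∈ U, HasGradientAt u (f' x) x) (hwU : ∀ n, w n ∈ U)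
    (hw : Tendsto w atTop (𝓝 x₀)) (hy : Tendsto (fun n => f' (w n)) atTop (𝓝 y))
    (hα : Tendsto (fun n => u (w n)) atTop (𝓝 α)) :
    IsSupportingPlane U u x₀ y (⟪y, x₀⟫ - α) := by
  have hle : ∀ x ∈ U, α + ⟪y, x - x₀⟫ ≤ u x := fun x hx =>
    le_of_tendsto' (hα.add (hy.inner (tendsto_const_nhds.sub hw))) fun n =>
      hu.tangent_le_of_hasGradientAt (hwU n) hx (hgrad _ (hwU n))
  refine isSupportingPlane_of_tendsto (fun x hx => ?_) hwU hw ?_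
  · linarith [hle x hx, inner_sub_right (𝕜 := ℝ) y x x₀]
  · simpa using hα.sub (((tendsto_const_nhds (x := y)).inner hw).sub_const (⟪y, x₀⟫ - α))

theorem exists_isSupportingPlane_of_not_tendsto [ProperSpace E] {x₀ : E}
    (hUne : U.Nonempty) (hUb : Bornology.IsBounded U) (hu : ConvexOn ℝ U u)
    (hgrad : ∀ x ∈ U, HasGradientAt u (f' x) x)
    (h : ¬ Tendsto (fun x => ‖f' x‖) (𝓝[U] x₀) atTop) :
    ∃ y c, IsSupportingPlane U u x₀ y c := by
  obtain ⟨z, hz⟩ := hUne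
  obtain ⟨b, hb⟩ : ∃ b, ∃ᶠ x in 𝓝[U] x₀, ‖f' x‖ < b := by
    simpa [tendsto_atTop, not_forall, not_eventually] using h
  obtain ⟨w, hw, hwb⟩ :=
    exists_seq_forall_of_frequently (hb.and_eventually eventually_mem_nhdsWithin)
  have hdiam : ∀ x ∈ U, ∀ x' ∈ U, ‖x - x'‖ ≤ Metric.diam U := fun x hx x' hx' => by
    rw [← dist_eq_norm]; exact Metric.dist_le_diam_of_mem hUb hx hx'
  have hbounds : ∀ n, (f' (w n), u (w n)) ∈ Metric.closedBall 0 b ×ˢ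
      Icc (u z - ‖f' z‖ * Metric.diam U) (u z + b * Metric.diam U) := fun n => by
    obtain ⟨hfb, hwU⟩ := hwb n
    have hlow := hu.sub_norm_mul_norm_le_of_hasGradientAt hz hwU (hgrad z hz)
    have hup := hu.sub_norm_mul_norm_le_of_hasGradientAt hwU hz (hgrad _ hwU)
    refine ⟨by simpa using hfb.le, ?_, ?_⟩
    · nlinarith [hdiam _ hwU _ hz, norm_nonneg (f' z)]
    · nlinarith [hdiam _ hz _ hwU, norm_nonneg (f' (w n)), norm_nonneg (z - w n)]
  obtain ⟨⟨y, α⟩, -, φ, hφ, hlim⟩ :=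
    ((isCompact_closedBall 0 b).prod isCompact_Icc).tendsto_subseq hbounds
  have hy : Tendsto (fun n => f' (w (φ n))) atTop (𝓝 y) := (continuous_fst.tendsto _).comp hlim
  have hα : Tendsto (fun n => u (w (φ n))) atTop (𝓝 α) := (continuous_snd.tendsto _).comp hlim
  have hwφ : Tendsto (fun n => w (φ n)) atTop (𝓝 x₀) :=
    (hw.mono_right nhdsWithin_le_nhds).comp hφ.tendsto_atTop
  exact ⟨y, _, hu.isSupportingPlane_of_tendsto_gradient hgrad (fun n => (hwb _).2) hwφ hy hα⟩

theorem exists_isSupportingPlane_of_notMem_image [ProperSpace E] {y : E} (hUo : IsOpen U)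
    (hUne : U.Nonempty) (hUb : Bornology.IsBounded U) (hu : ConvexOn ℝ U u)
    (hgrad : ∀ x ∈ U, HasGradientAt u (f' x) x) (hy : y ∉ f' '' U) :
    ∃ x₀ ∈ frontier U, ∃ c, IsSupportingPlane U u x₀ y c := by
  obtain ⟨z, hz⟩ := hUne
  set v := fun x => u x - (⟪y, x⟫ - 0)
  have hv : ConvexOn ℝ U v := hu.sub (concaveOn_inner_sub_const hu.1 y 0)
  have hvgrad : ∀ x ∈ U, HasGradientAt v (f' x - y) x := fun x hx =>
    (hgrad x hx).sub_inner_sub_const y 0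
  have hbdd : BddBelow (v '' U) := by
    refine ⟨v z - ‖f' z - y‖ * Metric.diam U, forall_mem_image.mpr fun x hx => ?_⟩
    have hdiam : ‖x - z‖ ≤ Metric.diam U := by
      rw [← dist_eq_norm]; exact Metric.dist_le_diam_of_mem hUb hx hz
    nlinarith [hv.sub_norm_mul_norm_le_of_hasGradientAt hz hx (hvgrad z hz),
      norm_nonneg (f' z - y)]
  obtain ⟨s, -, hs, hsv⟩ := exists_seq_tendsto_sInf ⟨v z, mem_image_of_mem v hz⟩ hbdd
  choose w hwU hws using hsv
  obtain ⟨x₀, hx₀, φ, hφ, hwφ⟩ := tendsto_subseq_of_bounded hUb hwU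
  set m := sInf (v '' U)
  have hvwφ : Tendsto (fun n => v (w (φ n))) atTop (𝓝 m) := by
    simpa [Function.comp_def, hws] using hs.comp hφ.tendsto_atTop
  have hx₀U : x₀ ∉ U := by
    intro hx₀U
    have hvx₀ : v x₀ = m :=
      tendsto_nhds_unique ((hvgrad x₀ hx₀U).continuousAt.tendsto.comp hwφ) hvwφ
    have hmin : IsLocalMin v x₀ := IsMinOn.isLocalMin
      (fun x hx => hvx₀ ▸ csInf_le hbdd (mem_image_of_mem v hx)) (hUo.mem_nhds hx₀U)
    exact hy ⟨x₀, hx₀U, sub_eq_zero.mp (hmin.hasGradientAt_eq_zero (hvgrad x₀ hx₀U))⟩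
  refine ⟨x₀, hUo.frontier_eq ▸ ⟨hx₀, hx₀U⟩, -m,
    isSupportingPlane_of_tendsto (fun x hx => ?_) (fun n => hwU _) hwφ ?_⟩
  · have := csInf_le hbdd (mem_image_of_mem v hx)
    simp only [v] at this
    linarith
  · simpa [v, sub_add_eq_sub_sub] using hvwφ.sub_const m

end InnerProductSpace

theorem gradient_blowup_tfae_general
    (U : Set (EuclideanSpace ℝ (Fin 2))) (hUo : IsOpen U) (hUc : Convex ℝ U)
    (hUne : U.Nonempty) (hUb : Bornology.IsBounded (closure U))
    (u : EuclideanSpace ℝ (Fin 2) → ℝ)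
    (hu : StrictConvexOn ℝ U u)
    (f' : EuclideanSpace ℝ (Fin 2) → EuclideanSpace ℝ (Fin 2))
    (hgrad : ∀ x ∈ U, HasGradientAt u (f' x) x) :
    ((∀ x₀ ∈ frontier U, Tendsto (fun x => ‖f' x‖) (nhdsWithin x₀ U) atTop) ↔
      ¬ ∃ x₀ ∈ frontier U, ∃ (y : EuclideanSpace ℝ (Fin 2)) (c : ℝ),
        (∀ x ∈ U, (inner ℝ y x : ℝ) - c ≤ u x) ∧
        (((inner ℝ y x₀ : ℝ) - c : ℝ) : EReal)
          = Filter.liminf (fun x => ((u x : ℝ) : EReal)) (nhdsWithin x₀ U)) ∧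
    ((∀ x₀ ∈ frontier U, Tendsto (fun x => ‖f' x‖) (nhdsWithin x₀ U) atTop) ↔
      f' '' U = Set.univ) := by
  have hUb' : Bornology.IsBounded U := hUb.subset subset_closure
  show (_ ↔ ¬ ∃ x₀ ∈ frontier U, ∃ y c, IsSupportingPlane U u x₀ y c) ∧ _
  rw [eq_univ_iff_forall]
  refine ⟨⟨?_, ?_⟩, ?_, ?_⟩
  · rintro hA ⟨x₀, hx₀, y, c, h⟩
    exact h.not_tendsto_norm_gradient_atTop hUo hUc hUne hu.convexOn hgrad hx₀.1 (hA x₀ hx₀)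
  · refine fun hnB x₀ hx₀ => by_contra fun hnA => hnB ?_
    obtain ⟨y, c, h⟩ := exists_isSupportingPlane_of_not_tendsto hUne hUb' hu.convexOn hgrad hnA
    exact ⟨x₀, hx₀, y, c, h⟩
  · refine fun hA y => by_contra fun hy => ?_
    obtain ⟨x₀, hx₀, c, h⟩ :=
      exists_isSupportingPlane_of_notMem_image hUo hUne hUb' hu.convexOn hgrad hy
    exact h.not_tendsto_norm_gradient_atTop hUo hUc hUne hu.convexOn hgrad hx₀.1 (hA x₀ hx₀)
  · refine fun hC x₀ hx₀ => by_contra fun hnA => ?_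
    obtain ⟨y, c, h⟩ := exists_isSupportingPlane_of_not_tendsto hUne hUb' hu.convexOn hgrad hnA
    exact h.notMem_image_gradient hUo hUc hu hgrad hx₀ (hC y)

/-- For a strictly convex `C¹` function `u` on a bounded convex open set `U ⊂ ℝ²`, the
following are equivalent:
(i) `‖Du(x)‖ → +∞` as `x → ∂U`;
(ii) the graph of the lower semicontinuous extension of `u` has no non-vertical supporting
plane at any boundary point of `U` (a supporting plane at `x₀ ∈ ∂U` being an affine function
`x ↦ ⟪y, x⟫ − c` lying below `u` on `U` whose value at `x₀` equals the extension
`liminf_{U ∋ x → x₀} u(x)`);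
(iii) `Du(U) = ℝ²`. -/
theorem gradient_blowup_tfae
    (U : Set (EuclideanSpace ℝ (Fin 2))) (hUo : IsOpen U) (hUc : Convex ℝ U)
    (hUne : U.Nonempty) (hUb : Bornology.IsBounded (closure U))
    (u : EuclideanSpace ℝ (Fin 2) → ℝ)
    (hu : StrictConvexOn ℝ U u)
    (f' : EuclideanSpace ℝ (Fin 2) → EuclideanSpace ℝ (Fin 2))
    (hgrad : ∀ x ∈ U, HasGradientAt u (f' x) x)
    (hC1 : ContinuousOn f' U) :
    ((∀ x₀ ∈ frontier U, Tendsto (fun x => ‖f' x‖) (nhdsWithin x₀ U) atTop) ↔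
      ¬ ∃ x₀ ∈ frontier U, ∃ (y : EuclideanSpace ℝ (Fin 2)) (c : ℝ),
        (∀ x ∈ U, (inner ℝ y x : ℝ) - c ≤ u x) ∧
        (((inner ℝ y x₀ : ℝ) - c : ℝ) : EReal)
          = Filter.liminf (fun x => ((u x : ℝ) : EReal)) (nhdsWithin x₀ U)) ∧
    ((∀ x₀ ∈ frontier U, Tendsto (fun x => ‖f' x‖) (nhdsWithin x₀ U) atTop) ↔
      f' '' U = Set.univ) :=
  gradient_blowup_tfae_general U hUo hUc hUne hUb u hu f' hgrad
end

section
/- Let p = (−1, 0) on the boundary of the unit disk 𝔻 ⊂ ℝ², and μ ≥ 0. Define u on 𝔻 by u(x₁, x₂) = μ(((x₁+1)² + x₂²)/(2(x₁+1)) − 1). Then u is convex on 𝔻 (its Hessian is positive semidefinite), u has boundary value −μ at p and boundary value 0 at every other point of ∂𝔻, and u restricted to any segment joining p to a point x ∈ ∂𝔻 is the affine function interpolating −μ at p and 0 at x. -/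
/-!
With `v = x - p` the function is `‖v‖² / (2⟪v, -p⟫) - 1`: a quadratic-over-linear function, hence
convex where the denominator is positive, and positively homogeneous of degree one in `v`, hence
affine along every chord issuing from `p`. For unit vectors `‖x - p‖² = 2 (1 - ⟪x, p⟫)`, so it
vanishes on the unit sphere away from `p`, and continuity there gives the radial limit `0`.
-/

open Filter Set Metric Topology RealInnerProductSpace

theorem sq_add_div_add_le {a b r s α β : ℝ} (ha : 0 ≤ a) (hb : 0 ≤ b) (hα : 0 < α) (hβ : 0 < β) :
    (a * r + b * s) ^ 2 / (a * α + b * β) ≤ a * (r ^ 2 / α) + b * (s ^ 2 / β) := by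
  rcases (add_nonneg (mul_nonneg ha hα.le) (mul_nonneg hb hβ.le)).eq_or_lt with hγ | hγ
  · rw [← hγ, div_zero]
    positivity
  rw [div_le_iff₀ hγ]
  have key : (a * (r ^ 2 / α) + b * (s ^ 2 / β)) * (a * α + b * β) - (a * r + b * s) ^ 2
      = a * b * (β * r - α * s) ^ 2 / (α * β) := by
    field_simp
    ring
  have : 0 ≤ a * b * (β * r - α * s) ^ 2 / (α * β) := by positivity
  linarith

section Barrier

variable {E : Type*} [NormedAddCommGroup E] [InnerProductSpace ℝ E]

noncomputable def sphereBarrier (p x : E) : ℝ := ‖x - p‖ ^ 2 / (2 * (1 - ⟪x, p⟫)) - 1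

theorem convexOn_sphereBarrier (p : E) : ConvexOn ℝ {x | ⟪x, p⟫ < 1} (sphereBarrier p) := by
  refine ⟨convex_halfSpace_lt ⟨fun x y => inner_add_left x y p,
    fun c x => real_inner_smul_left x p c⟩ 1, fun x hx y hy a b ha hb hab => ?_⟩
  have hα : 0 < 2 * (1 - ⟪x, p⟫) := by linarith [show ⟪x, p⟫ < 1 from hx]
  have hβ : 0 < 2 * (1 - ⟪y, p⟫) := by linarith [show ⟪y, p⟫ < 1 from hy]
  have hden :
      2 * (1 - ⟪a • x + b • y, p⟫) = a * (2 * (1 - ⟪x, p⟫)) + b * (2 * (1 - ⟪y, p⟫)) := by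
    rw [inner_add_left, real_inner_smul_left, real_inner_smul_left]
    linear_combination -2 * hab
  have hnorm : ‖a • x + b • y - p‖ ≤ a * ‖x - p‖ + b * ‖y - p‖ := by
    have : a • x + b • y - p = a • (x - p) + b • (y - p) := by
      linear_combination (norm := module) hab • p
    rw [this]
    refine (norm_add_le _ _).trans_eq ?_
    rw [norm_smul_of_nonneg ha, norm_smul_of_nonneg hb]
  have key : ‖a • x + b • y - p‖ ^ 2 / (2 * (1 - ⟪a • x + b • y, p⟫)) ≤
      a * (‖x - p‖ ^ 2 / (2 * (1 - ⟪x, p⟫))) + b * (‖y - p‖ ^ 2 / (2 * (1 - ⟪y, p⟫))) :=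
    calc _ ≤ (a * ‖x - p‖ + b * ‖y - p‖) ^ 2 / (2 * (1 - ⟪a • x + b • y, p⟫)) := by
          rw [hden]; gcongr
      _ ≤ _ := hden ▸ sq_add_div_add_le ha hb hα hβ
  simp only [sphereBarrier, smul_eq_mul]
  linear_combination key + hab

theorem sphereBarrier_lineMap {p : E} (hp : ‖p‖ = 1) (y : E) (s : ℝ) :
    sphereBarrier p ((1 - s) • p + s • y) = s * (sphereBarrier p y + 1) - 1 := by
  have hsub : (1 - s) • p + s • y - p = s • (y - p) := by module
  have hinner : 1 - ⟪(1 - s) • p + s • y, p⟫ = s * (1 - ⟪y, p⟫) := by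
    rw [inner_add_left, real_inner_smul_left, real_inner_smul_left, real_inner_self_eq_norm_sq, hp]
    ring
  rw [sphereBarrier, sphereBarrier, hsub, hinner, norm_smul, mul_pow, Real.norm_eq_abs, sq_abs]
  -- at `s = 0` both sides are `-1`, the left one because `0 / 0 = 0`
  rcases eq_or_ne s 0 with rfl | hs
  · simp
  · rw [sub_add_cancel, sq, mul_assoc, mul_left_comm 2, mul_div_mul_left _ _ hs, mul_div_assoc]

theorem norm_sub_sq_eq_of_norm_eq_one {x p : E} (hx : ‖x‖ = 1) (hp : ‖p‖ = 1) :
    ‖x - p‖ ^ 2 = 2 * (1 - ⟪x, p⟫) := by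
  rw [norm_sub_sq_real, hx, hp]
  ring

theorem sphereBarrier_eq_zero {x p : E} (hx : ‖x‖ = 1) (hp : ‖p‖ = 1) (hxp : x ≠ p) :
    sphereBarrier p x = 0 := by
  rw [sphereBarrier, ← norm_sub_sq_eq_of_norm_eq_one hx hp, div_self, sub_self]
  exact pow_ne_zero 2 (norm_ne_zero_iff.mpr (sub_ne_zero.mpr hxp))

theorem continuousAt_sphereBarrier {x p : E} (hx : ⟪x, p⟫ ≠ 1) :
    ContinuousAt (sphereBarrier p) x := by
  unfold sphereBarrier
  refine ((by fun_prop : Continuous fun x : E => ‖x - p‖ ^ 2).continuousAt.div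
    (by fun_prop) ?_).sub continuousAt_const
  exact mul_ne_zero two_ne_zero (sub_ne_zero.mpr hx.symm)

theorem real_inner_lt_one_of_mem_ball {x p : E} (hx : x ∈ ball (0 : E) 1) (hp : ‖p‖ ≤ 1) :
    ⟪x, p⟫ < 1 :=
  calc ⟪x, p⟫ ≤ ‖x‖ * ‖p‖ := real_inner_le_norm x p
    _ ≤ ‖x‖ := mul_le_of_le_one_right (norm_nonneg x) hp
    _ < 1 := mem_ball_zero_iff.mp hx

theorem convexOn_sphereBarrier_ball {p : E} (hp : ‖p‖ ≤ 1) :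
    ConvexOn ℝ (ball 0 1) (sphereBarrier p) :=
  (convexOn_sphereBarrier p).subset (fun _ hx => real_inner_lt_one_of_mem_ball hx hp)
    (convex_ball 0 1)

theorem tendsto_sphereBarrier_lineMap_self {p : E} (hp : ‖p‖ = 1) (y : E) :
    Tendsto (fun s : ℝ => sphereBarrier p ((1 - s) • p + s • y)) (𝓝 0) (𝓝 (-1)) := by
  simp_rw [sphereBarrier_lineMap hp]
  have : Continuous fun s : ℝ => s * (sphereBarrier p y + 1) - 1 := by fun_prop
  simpa using this.tendsto 0

theorem tendsto_sphereBarrier_lineMap {x p : E} (hx : ‖x‖ = 1) (hp : ‖p‖ = 1) (hxp : x ≠ p)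
    (y : E) : Tendsto (fun s : ℝ => sphereBarrier p ((1 - s) • x + s • y)) (𝓝 0) (𝓝 0) := by
  have hinner : ⟪x, p⟫ ≠ 1 := by
    intro h
    have := norm_sub_sq_eq_of_norm_eq_one hx hp
    rw [h, sub_self, mul_zero, sq_eq_zero_iff, norm_eq_zero, sub_eq_zero] at this
    exact hxp this
  have hpath : Tendsto (fun s : ℝ => (1 - s) • x + s • y) (𝓝 0) (𝓝 x) := by
    simpa using ((by fun_prop : Continuous fun s : ℝ => (1 - s) • x + s • y).tendsto 0)
  exact (sphereBarrier_eq_zero hx hp hxp ▸ (continuousAt_sphereBarrier hinner).tendsto).comp hpath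

end Barrier

section Disk

variable {p : EuclideanSpace ℝ (Fin 2)}

theorem norm_sub_sq_eq_of_coords (hp0 : p 0 = -1) (hp1 : p 1 = 0)
    (x : EuclideanSpace ℝ (Fin 2)) :
    ‖x - p‖ ^ 2 = (x 0 + 1) ^ 2 + x 1 ^ 2 := by
  simp [EuclideanSpace.real_norm_sq_eq, Fin.sum_univ_two, hp0, hp1]

theorem sphereBarrier_eq_of_coords (hp0 : p 0 = -1) (hp1 : p 1 = 0)
    (x : EuclideanSpace ℝ (Fin 2)) :
    sphereBarrier p x = ((x 0 + 1) ^ 2 + x 1 ^ 2) / (2 * (x 0 + 1)) - 1 := by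
  have : ⟪x, p⟫ = - x 0 := by simp [PiLp.inner_apply, Fin.sum_univ_two, hp0, hp1]
  rw [sphereBarrier, this, sub_neg_eq_add, add_comm 1, norm_sub_sq_eq_of_coords hp0 hp1]

theorem norm_eq_one_of_coords (hp0 : p 0 = -1) (hp1 : p 1 = 0) : ‖p‖ = 1 := by
  have h := norm_sub_sq_eq_of_coords hp0 hp1 0
  rw [zero_sub, norm_neg] at h
  exact (pow_eq_one_iff_of_nonneg (norm_nonneg p) two_ne_zero).mp (by simpa using h)

end Disk

/-- Let `p = (−1, 0) ∈ ∂𝔻` and `μ ≥ 0`.  The function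
`u(x₁, x₂) = μ(((x₁+1)² + x₂²)/(2(x₁+1)) − 1)` is convex on the unit disk `𝔻`, has boundary
value `−μ` at `p` (radial limit) and boundary value `0` at every other boundary point, and its
restriction to any chord from `p` to `x ∈ ∂𝔻` is the affine function interpolating `−μ` at `p`
and `0` at `x`. -/
theorem disk_barrier_function
    (μ : ℝ) (hμ : 0 ≤ μ)
    (p : EuclideanSpace ℝ (Fin 2)) (hp0 : p 0 = -1) (hp1 : p 1 = 0) :
    let u : EuclideanSpace ℝ (Fin 2) → ℝ := fun x =>
      μ * (((x 0 + 1) ^ 2 + (x 1) ^ 2) / (2 * (x 0 + 1)) - 1)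
    ConvexOn ℝ (ball (0 : EuclideanSpace ℝ (Fin 2)) 1) u ∧
    (∀ x₁ ∈ ball (0 : EuclideanSpace ℝ (Fin 2)) 1,
      Tendsto (fun s : ℝ => u ((1 - s) • p + s • x₁))
        (nhdsWithin 0 (Ioi 0)) (nhds (-μ))) ∧
    (∀ x₀ ∈ sphere (0 : EuclideanSpace ℝ (Fin 2)) 1, x₀ ≠ p →
      ∀ x₁ ∈ ball (0 : EuclideanSpace ℝ (Fin 2)) 1,
        Tendsto (fun s : ℝ => u ((1 - s) • x₀ + s • x₁))
          (nhdsWithin 0 (Ioi 0)) (nhds 0)) ∧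
    (∀ x ∈ sphere (0 : EuclideanSpace ℝ (Fin 2)) 1, x ≠ p →
      ∀ s ∈ Ioo (0 : ℝ) 1, u ((1 - s) • p + s • x) = -μ * (1 - s)) := by
  intro u
  have hu : u = fun x => μ * sphereBarrier p x := by
    funext x
    rw [sphereBarrier_eq_of_coords hp0 hp1]
  have hp := norm_eq_one_of_coords hp0 hp1
  rw [hu]
  refine ⟨(convexOn_sphereBarrier_ball hp.le).smul hμ, fun x₁ _ => ?_,
    fun x₀ hx₀ hx₀p x₁ _ => ?_, fun x hx hxp s _ => ?_⟩
  · simpa using ((tendsto_sphereBarrier_lineMap_self hp x₁).const_mul μ).mono_left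
      nhdsWithin_le_nhds
  · have h := tendsto_sphereBarrier_lineMap (mem_sphere_zero_iff_norm.mp hx₀) hp hx₀p x₁
    simpa using (h.const_mul μ).mono_left nhdsWithin_le_nhds
  · dsimp only
    rw [sphereBarrier_lineMap hp, sphereBarrier_eq_zero (mem_sphere_zero_iff_norm.mp hx) hp hxp]
    ring
end

section
/- Let ψ be the function on the boundary of the unit disk 𝔻 ⊂ ℝ² defined by ψ = 0 on ∂𝔻 ∖ {p} and ψ(p) = −μ, where p = (−1,0) ∈ ∂𝔻 and μ ≥ 0. Then the convex envelope of ψ on 𝔻 equals the function u(x₁,x₂) = μ(((x₁+1)²+x₂²)/(2(x₁+1)) − 1); in particular the convex envelope is smooth on 𝔻 and has boundary values exactly ψ. -/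
open Filter Set Metric
open scoped ContDiff

private lemma normSqTwo (x : EuclideanSpace ℝ (Fin 2)) :
    ‖x‖ ^ 2 = (x 0) ^ 2 + (x 1) ^ 2 := by
  rw [EuclideanSpace.norm_eq, Real.sq_sqrt (by positivity)]
  simp [Fin.sum_univ_two, Real.norm_eq_abs, sq_abs]

private noncomputable def affW (c0 c1 c2 : ℝ) : EuclideanSpace ℝ (Fin 2) →ᵃ[ℝ] ℝ where
  toFun y := c0 * y 0 + c1 * y 1 + c2
  linear := {
    toFun := fun y => c0 * y 0 + c1 * y 1
    map_add' := by intro a b; simp [PiLp.add_apply]; ring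
    map_smul' := by intro m a; simp [PiLp.smul_apply, smul_eq_mul]; ring }
  map_vadd' := by intro q v; simp [PiLp.add_apply]; ring

private lemma upperBd (μ : ℝ) (hμ : 0 ≤ μ)
    (p : EuclideanSpace ℝ (Fin 2)) (hp0 : p 0 = -1) (hp1 : p 1 = 0)
    (ψ : EuclideanSpace ℝ (Fin 2) → ℝ)
    (hψp : ψ p = -μ)
    (hψ0 : ∀ z ∈ sphere (0 : EuclideanSpace ℝ (Fin 2)) 1, z ≠ p → ψ z = 0)
    (a : EuclideanSpace ℝ (Fin 2) →ᵃ[ℝ] ℝ)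
    (ha : ∀ z ∈ sphere (0 : EuclideanSpace ℝ (Fin 2)) 1, a z ≤ ψ z)
    {x : EuclideanSpace ℝ (Fin 2)} (hx : x ∈ ball (0 : EuclideanSpace ℝ (Fin 2)) 1) :
    a x ≤ μ * (((x 0 + 1) ^ 2 + (x 1) ^ 2) / (2 * (x 0 + 1)) - 1) := by
  have hxn : ‖x‖ < 1 := by simpa using hx
  have hx2 : (x 0) ^ 2 + (x 1) ^ 2 < 1 := by
    rw [← normSqTwo]; nlinarith [norm_nonneg x]
  have hs : 0 < x 0 + 1 := by nlinarith [sq_nonneg (x 0 + 1), sq_nonneg (x 1)]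
  set t : ℝ := ((x 0 + 1) ^ 2 + (x 1) ^ 2) / (2 * (x 0 + 1)) with htdef
  have ht0 : 0 < t := by
    apply div_pos; · nlinarith [sq_nonneg (x 1)]
    · linarith
  have ht1 : t < 1 := by
    rw [htdef, div_lt_one (by linarith)]; nlinarith
  set q : EuclideanSpace ℝ (Fin 2) :=
    (WithLp.equiv 2 (Fin 2 → ℝ)).symm ![(x 0 + 1) / t - 1, x 1 / t] with hqdef
  have hq0 : q 0 = (x 0 + 1) / t - 1 := by rw [hqdef]; simp
  have hq1 : q 1 = x 1 / t := by rw [hqdef]; simp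
  have hqt : (q 0) ^ 2 + (q 1) ^ 2 = 1 := by
    rw [hq0, hq1, htdef]
    have h1 : (x 0 + 1) ^ 2 + (x 1) ^ 2 ≠ 0 := by nlinarith [sq_nonneg (x 1)]
    field_simp
    ring
  have hqs : q ∈ sphere (0 : EuclideanSpace ℝ (Fin 2)) 1 := by
    rw [mem_sphere_zero_iff_norm, ← Real.sqrt_sq (norm_nonneg q), normSqTwo, hqt, Real.sqrt_one]
  have hqp : q ≠ p := by
    intro h
    rw [h, hp0] at hq0
    have : (x 0 + 1) / t > 0 := div_pos hs ht0
    linarith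
  have hps : p ∈ sphere (0 : EuclideanSpace ℝ (Fin 2)) 1 := by
    rw [mem_sphere_zero_iff_norm, ← Real.sqrt_sq (norm_nonneg p), normSqTwo, hp0, hp1]
    norm_num
  have hap : a p ≤ -μ := by rw [← hψp]; exact ha p hps
  have haq : a q ≤ 0 := by rw [← hψ0 q hqs hqp]; exact ha q hqs
  have hxq : x = AffineMap.lineMap p q t := by
    have hl : ∀ i : Fin 2, (AffineMap.lineMap p q t : EuclideanSpace ℝ (Fin 2)) i
        = t * (q i - p i) + p i := by
      intro i
      simp [AffineMap.lineMap_apply, PiLp.add_apply, PiLp.smul_apply, PiLp.sub_apply,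
        smul_eq_mul]
    apply PiLp.ext
    intro i
    rw [hl i]
    fin_cases i
    · show x 0 = t * (q 0 - p 0) + p 0
      rw [hq0, hp0, htdef]
      field_simp
      ring
    · show x 1 = t * (q 1 - p 1) + p 1
      rw [hq1, hp1, htdef]
      field_simp
      ring
  have hax : a x = t * (a q - a p) + a p := by
    rw [hxq, AffineMap.apply_lineMap, AffineMap.lineMap_apply, vsub_eq_sub, vadd_eq_add,
      smul_eq_mul]
  nlinarith [mul_le_mul_of_nonneg_left hap (by linarith : (0:ℝ) ≤ 1 - t),
    mul_le_mul_of_nonneg_left haq (le_of_lt ht0)]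

private lemma witnessBd (μ : ℝ) (hμ : 0 ≤ μ)
    (p : EuclideanSpace ℝ (Fin 2)) (hp0 : p 0 = -1) (hp1 : p 1 = 0)
    (ψ : EuclideanSpace ℝ (Fin 2) → ℝ)
    (hψp : ψ p = -μ)
    (hψ0 : ∀ z ∈ sphere (0 : EuclideanSpace ℝ (Fin 2)) 1, z ≠ p → ψ z = 0)
    {x : EuclideanSpace ℝ (Fin 2)} (hx : x ∈ ball (0 : EuclideanSpace ℝ (Fin 2)) 1) :
    ∃ a : EuclideanSpace ℝ (Fin 2) →ᵃ[ℝ] ℝ,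
      (∀ z ∈ sphere (0 : EuclideanSpace ℝ (Fin 2)) 1, a z ≤ ψ z) ∧
      a x = μ * (((x 0 + 1) ^ 2 + (x 1) ^ 2) / (2 * (x 0 + 1)) - 1) := by
  have hxn : ‖x‖ < 1 := by simpa using hx
  have hx2 : (x 0) ^ 2 + (x 1) ^ 2 < 1 := by
    rw [← normSqTwo]; nlinarith [norm_nonneg x]
  have hs : 0 < x 0 + 1 := by nlinarith [sq_nonneg (x 0 + 1), sq_nonneg (x 1)]
  set k : ℝ := x 1 / (x 0 + 1) with hkdef
  refine ⟨affW (μ * ((1 - k ^ 2) / 2)) (μ * k) (-(μ * ((1 + k ^ 2) / 2))), ?_, ?_⟩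
  · intro z hz
    have hz2 : (z 0) ^ 2 + (z 1) ^ 2 = 1 := by
      have h : ‖z‖ = 1 := by simpa using hz
      rw [← normSqTwo, h]; norm_num
    by_cases hzp : z = p
    · subst hzp
      rw [hψp]
      show μ * ((1 - k ^ 2) / 2) * z 0 + μ * k * z 1 + -(μ * ((1 + k ^ 2) / 2)) ≤ -μ
      rw [hp0, hp1]
      ring_nf
      linarith
    · rw [hψ0 z hz hzp]
      show μ * ((1 - k ^ 2) / 2) * z 0 + μ * k * z 1 + -(μ * ((1 + k ^ 2) / 2)) ≤ 0
      have key : (1 - k ^ 2) * z 0 + 2 * k * z 1 ≤ 1 + k ^ 2 := by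
        nlinarith [sq_nonneg ((1 + k ^ 2) * z 0 - (1 - k ^ 2)),
          sq_nonneg ((1 + k ^ 2) * z 1 - 2 * k), sq_nonneg k,
          sq_nonneg (k ^ 2), sq_nonneg (k * z 0), sq_nonneg (k * z 1)]
      nlinarith [mul_nonneg hμ
        (by linarith : (0:ℝ) ≤ 1 + k ^ 2 - ((1 - k ^ 2) * z 0 + 2 * k * z 1))]
  · show μ * ((1 - k ^ 2) / 2) * x 0 + μ * k * x 1 + -(μ * ((1 + k ^ 2) / 2))
      = μ * (((x 0 + 1) ^ 2 + (x 1) ^ 2) / (2 * (x 0 + 1)) - 1)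
    rw [hkdef]
    field_simp
    ring

/-- Let `ψ = 0` on `∂𝔻 ∖ {p}` and `ψ(p) = −μ`, with `p = (−1,0)` and `μ ≥ 0`.  Then the convex
envelope of `ψ` on the unit disk `𝔻` equals
`u(x₁,x₂) = μ(((x₁+1)² + x₂²)/(2(x₁+1)) − 1)` in `𝔻`; in particular the envelope is smooth on
`𝔻` and its (radial-limit) boundary values are exactly `ψ`. -/
theorem disk_envelope_formula
    (μ : ℝ) (hμ : 0 ≤ μ)
    (p : EuclideanSpace ℝ (Fin 2)) (hp0 : p 0 = -1) (hp1 : p 1 = 0)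
    (ψ : EuclideanSpace ℝ (Fin 2) → ℝ)
    (hψp : ψ p = -μ)
    (hψ0 : ∀ z ∈ sphere (0 : EuclideanSpace ℝ (Fin 2)) 1, z ≠ p → ψ z = 0) :
    let env : EuclideanSpace ℝ (Fin 2) → EReal := fun x =>
      ⨆ a : {a : EuclideanSpace ℝ (Fin 2) →ᵃ[ℝ] ℝ //
          ∀ z ∈ sphere (0 : EuclideanSpace ℝ (Fin 2)) 1, a z ≤ ψ z},
        ((a.1 x : ℝ) : EReal)
    (∀ x ∈ ball (0 : EuclideanSpace ℝ (Fin 2)) 1,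
      env x = ((μ * (((x 0 + 1) ^ 2 + (x 1) ^ 2) / (2 * (x 0 + 1)) - 1) : ℝ) : EReal)) ∧
    (∃ v : EuclideanSpace ℝ (Fin 2) → ℝ,
      ContDiffOn ℝ (⊤ : ℕ∞) v (ball (0 : EuclideanSpace ℝ (Fin 2)) 1) ∧
      ∀ x ∈ ball (0 : EuclideanSpace ℝ (Fin 2)) 1, env x = ((v x : ℝ) : EReal)) ∧
    (∀ x₀ ∈ sphere (0 : EuclideanSpace ℝ (Fin 2)) 1,
      ∀ x₁ ∈ ball (0 : EuclideanSpace ℝ (Fin 2)) 1,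
        Tendsto (fun s : ℝ => env ((1 - s) • x₀ + s • x₁))
          (nhdsWithin 0 (Ioi 0)) (nhds ((ψ x₀ : ℝ) : EReal))) := by
  intro env
  set v : EuclideanSpace ℝ (Fin 2) → ℝ :=
    fun x => μ * (((x 0 + 1) ^ 2 + (x 1) ^ 2) / (2 * (x 0 + 1)) - 1) with hvdef
  have key : ∀ x ∈ ball (0 : EuclideanSpace ℝ (Fin 2)) 1, env x = ((v x : ℝ) : EReal) := by
    intro x hx
    apply le_antisymm
    · refine iSup_le ?_
      rintro ⟨a, ha⟩
      exact EReal.coe_le_coe_iff.2 (upperBd μ hμ p hp0 hp1 ψ hψp hψ0 a ha hx)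
    · obtain ⟨a, ha, hax⟩ := witnessBd μ hμ p hp0 hp1 ψ hψp hψ0 hx
      exact le_iSup_of_le ⟨a, ha⟩ (by rw [hax])
  have hballpos : ∀ x ∈ ball (0 : EuclideanSpace ℝ (Fin 2)) 1, 0 < x 0 + 1 := by
    intro x hx
    have hxn : ‖x‖ < 1 := by simpa using hx
    have hx2 : (x 0) ^ 2 + (x 1) ^ 2 < 1 := by
      rw [← normSqTwo]; nlinarith [norm_nonneg x]
    nlinarith [sq_nonneg (x 0 + 1), sq_nonneg (x 1)]
  refine ⟨key, ⟨v, ?_, key⟩, ?_⟩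
  · -- smoothness
    have c0 : ContDiff ℝ ω (fun x : EuclideanSpace ℝ (Fin 2) => x 0) :=
      (EuclideanSpace.proj (0 : Fin 2) : EuclideanSpace ℝ (Fin 2) →L[ℝ] ℝ).contDiff
    have c1 : ContDiff ℝ ω (fun x : EuclideanSpace ℝ (Fin 2) => x 1) :=
      (EuclideanSpace.proj (1 : Fin 2) : EuclideanSpace ℝ (Fin 2) →L[ℝ] ℝ).contDiff
    apply ContDiffOn.mul contDiffOn_const
    apply ContDiffOn.sub _ contDiffOn_const
    apply ContDiffOn.div
    · exact ((((c0.add contDiff_const).pow 2).add (c1.pow 2)).of_le le_top).contDiffOn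
    · exact ((contDiff_const.mul (c0.add contDiff_const)).of_le le_top).contDiffOn
    · intro x hx
      have := hballpos x hx
      positivity
  · -- boundary limits
    intro x₀ hx₀ x₁ hx₁
    set γ : ℝ → EuclideanSpace ℝ (Fin 2) := fun s => (1 - s) • x₀ + s • x₁ with hγdef
    have hγi : ∀ (s : ℝ) (i : Fin 2), γ s i = (1 - s) * x₀ i + s * x₁ i := by
      intro s i
      simp [hγdef, PiLp.add_apply, PiLp.smul_apply, smul_eq_mul]
    have hx₀n : ‖x₀‖ = 1 := by simpa using hx₀
    have hx₁n : ‖x₁‖ < 1 := by simpa using hx₁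
    have hγmem : ∀ s ∈ Ioo (0:ℝ) 1, γ s ∈ ball (0 : EuclideanSpace ℝ (Fin 2)) 1 := by
      intro s hs
      rw [mem_ball_zero_iff]
      calc ‖γ s‖ ≤ ‖(1 - s) • x₀‖ + ‖s • x₁‖ := norm_add_le _ _
        _ = (1 - s) * 1 + s * ‖x₁‖ := by
            rw [norm_smul, norm_smul, hx₀n, Real.norm_eq_abs, Real.norm_eq_abs,
              abs_of_nonneg (by linarith [hs.2] : (0:ℝ) ≤ 1 - s),
              abs_of_nonneg (le_of_lt hs.1)]
        _ < (1 - s) * 1 + s * 1 := by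
            have := hs.1
            gcongr
        _ = 1 := by ring
    have hev : (fun s : ℝ => env (γ s)) =ᶠ[nhdsWithin 0 (Ioi 0)]
        (fun s : ℝ => ((v (γ s) : ℝ) : EReal)) := by
      filter_upwards [Ioo_mem_nhdsGT_of_mem (⟨le_refl (0:ℝ), one_pos⟩ : (0:ℝ) ∈ Ico 0 1)]
        with s hs
      exact key (γ s) (hγmem s hs)
    rw [tendsto_congr' hev, EReal.tendsto_coe]
    -- now a real-valued limit
    by_cases hx₀p : x₀ = p
    · subst hx₀p
      rw [hψp]
      have hY : 0 < x₁ 0 + 1 := hballpos x₁ hx₁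
      set c : ℝ := ((x₁ 0 + 1) ^ 2 + (x₁ 1) ^ 2) / (2 * (x₁ 0 + 1)) with hcdef
      have heq : (fun s : ℝ => v (γ s)) =ᶠ[nhdsWithin 0 (Ioi 0)]
          (fun s : ℝ => μ * (s * c - 1)) := by
        filter_upwards [self_mem_nhdsWithin] with s hs
        have hs0 : (0:ℝ) < s := hs
        rw [hvdef]
        simp only
        rw [hγi s 0, hγi s 1, hp0, hp1, hcdef]
        have h1 : (1 - s) * (-1) + s * x₁ 0 + 1 = s * (x₁ 0 + 1) := by ring
        have h2 : (1 - s) * 0 + s * x₁ 1 = s * x₁ 1 := by ring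
        rw [h1, h2]
        have hsne : s ≠ 0 := ne_of_gt hs0
        have hYne : x₁ 0 + 1 ≠ 0 := ne_of_gt hY
        field_simp
      rw [tendsto_congr' heq]
      have : Tendsto (fun s : ℝ => μ * (s * c - 1)) (nhds 0) (nhds (μ * (0 * c - 1))) := by
        apply Tendsto.mul tendsto_const_nhds
        exact (tendsto_id.mul tendsto_const_nhds).sub tendsto_const_nhds
      have h := this.mono_left
        (nhdsWithin_le_nhds : nhdsWithin (0:ℝ) (Ioi 0) ≤ nhds 0)
      simpa using h
    · have hψx₀ : ψ x₀ = 0 := hψ0 x₀ hx₀ hx₀p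
      have hx₀2 : (x₀ 0) ^ 2 + (x₀ 1) ^ 2 = 1 := by
        rw [← normSqTwo, hx₀n]; norm_num
      have hX : 0 < x₀ 0 + 1 := by
        rcases lt_or_ge (-1) (x₀ 0) with h | h
        · linarith
        · exfalso
          have h1 : x₀ 0 = -1 := by nlinarith [sq_nonneg (x₀ 1)]
          have h2 : x₀ 1 = 0 := by
            have : (x₀ 1) ^ 2 = 0 := by nlinarith
            exact (pow_eq_zero_iff two_ne_zero).mp this
          apply hx₀p
          apply PiLp.ext
          intro i
          fin_cases i
          · show x₀ 0 = p 0; rw [h1, hp0]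
          · show x₀ 1 = p 1; rw [h2, hp1]
      have hγt : Tendsto γ (nhdsWithin 0 (Ioi 0)) (nhds x₀) := by
        have hc : Continuous γ := by
          apply Continuous.add
          · exact (continuous_const.sub continuous_id).smul continuous_const
          · exact continuous_id.smul continuous_const
        have h0 : γ 0 = x₀ := by
          apply PiLp.ext
          intro i
          rw [hγi 0 i]
          ring
        have := hc.tendsto 0
        rw [h0] at this
        exact this.mono_left nhdsWithin_le_nhds
      have hvc : ContinuousAt v x₀ := by
        have hc0 : Continuous (fun x : EuclideanSpace ℝ (Fin 2) => x 0) :=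
          (EuclideanSpace.proj (0 : Fin 2)).continuous
        have hc1 : Continuous (fun x : EuclideanSpace ℝ (Fin 2) => x 1) :=
          (EuclideanSpace.proj (1 : Fin 2)).continuous
        apply ContinuousAt.mul continuousAt_const
        apply ContinuousAt.sub _ continuousAt_const
        apply ContinuousAt.div
        · exact (((hc0.add continuous_const).pow 2).add (hc1.pow 2)).continuousAt
        · exact (continuous_const.mul (hc0.add continuous_const)).continuousAt
        · positivity
      have hv0 : v x₀ = 0 := by
        rw [hvdef]
        simp only
        have h3 : (x₀ 0 + 1) ^ 2 + (x₀ 1) ^ 2 = 2 * (x₀ 0 + 1) := by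
          linear_combination hx₀2
        rw [h3, div_self (by positivity), sub_self, mul_zero]
      have hfin := hvc.tendsto.comp hγt
      rw [hv0] at hfin
      rwa [hψx₀]
end
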